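/- arXiv:math/0505028 — 2 statements merged into one kernel-verified Lean document; each statement's English description precedes it below -/
import Mathlib

section
/- Let θ be an irrational number and let f : 𝕋 → ℝ be a continuous function. Then for every ε > 0 there exists a continuous map g : 𝕋 → 𝕋 such that |e^{2πi f(ξ)} · g(ξ) · conj(g(ξ · e^{2πiθ})) − 1| < ε for all ξ ∈ 𝕋. -/
open Complex Real

noncomputable section

lemma circle_exp_zpow (x : ℝ) (n : ℤ) : Circle.exp x ^ n = Circle.exp (n * x) := by
  induction n using Int.induction_on with
  | zero => simp
  | succ k ih =>
      rw [zpow_add_one, ih, ← Circle.exp_add]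
      congr 1; push_cast; ring
  | pred k ih =>
      rw [zpow_sub_one, ih, ← Circle.exp_neg, ← Circle.exp_add]
      congr 1; push_cast; ring

lemma comm_group_helper {G : Type*} [CommGroup G] (P A B C D : G) :
    P * (A * B) * (A * D * C)⁻¹ = P * B * C⁻¹ * D⁻¹ := by
  rw [mul_inv, mul_inv]
  have h : P * (A * B) * (A⁻¹ * D⁻¹ * C⁻¹) = (A * A⁻¹) * (P * B * C⁻¹ * D⁻¹) := by ac_rfl
  rw [h, mul_inv_cancel, one_mul]

lemma exists_int_close (θ : ℝ) (hθ : Irrational θ) (c ε : ℝ) (hε : 0 < ε) :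
    ∃ n m : ℤ, |c - (m + n * θ)| < ε := by
  have hd : Dense ((AddSubgroup.closure {1, θ} : AddSubgroup ℝ) : Set ℝ) := by
    rcases AddSubgroup.dense_or_cyclic (AddSubgroup.closure {1, θ}) with h | ⟨a, ha⟩
    · exact h
    · exfalso
      have h1 : (1 : ℝ) ∈ AddSubgroup.closure ({1, θ} : Set ℝ) :=
        AddSubgroup.subset_closure (by simp)
      have h2 : θ ∈ AddSubgroup.closure ({1, θ} : Set ℝ) :=
        AddSubgroup.subset_closure (by simp)
      rw [ha, AddSubgroup.mem_closure_singleton] at h1 h2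
      obtain ⟨p, hp⟩ := h1
      obtain ⟨q, hq⟩ := h2
      rw [zsmul_eq_mul] at hp hq
      have hp0 : p ≠ 0 := by rintro rfl; simp at hp
      have key : (p : ℝ) * θ = q := by
        rw [← hq]
        calc (p : ℝ) * ((q : ℝ) * a) = (q : ℝ) * ((p : ℝ) * a) := by ring
        _ = q := by rw [hp, mul_one]
      exact (hθ.intCast_mul hp0).ne_int q key
  have hc : c ∈ closure ((AddSubgroup.closure {1, θ} : AddSubgroup ℝ) : Set ℝ) := hd c
  rw [Metric.mem_closure_iff] at hc
  obtain ⟨b, hb, hbe⟩ := hc ε hε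
  obtain ⟨m, n, rfl⟩ := (AddSubgroup.mem_closure_pair).1 hb
  exact ⟨n, m, by simpa [Real.dist_eq, zsmul_eq_mul] using hbe⟩

lemma span_coboundary (θ : ℝ) (hθ : Irrational θ) (F : C(AddCircle (1:ℝ), ℂ))
    (hF : F ∈ Submodule.span ℂ (Set.range (@fourier 1))) :
    ∃ (c : ℂ) (h : C(AddCircle (1:ℝ), ℂ)),
      ∀ x : AddCircle (1:ℝ), F x = c + h (x + ((θ : ℝ) : AddCircle (1:ℝ))) - h x := by
  induction hF using Submodule.span_induction with
  | mem F hF =>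
    obtain ⟨n, rfl⟩ := hF
    rcases eq_or_ne n 0 with rfl | hn
    · exact ⟨1, 0, fun x => by simp⟩
    · set lam : ℂ := fourier n (((θ : ℝ)) : AddCircle (1:ℝ)) with hlam
      have hl1 : lam ≠ 1 := by
        rw [hlam, fourier_coe_apply]
        intro hcon
        rw [Complex.exp_eq_one_iff] at hcon
        obtain ⟨k, hk⟩ := hcon
        have hI : (2 * (π : ℂ) * I) ≠ 0 := by
          simp [Real.pi_ne_zero, Complex.I_ne_zero]
        have h2 : (n : ℂ) * (θ : ℂ) = (k : ℂ) := by
          apply mul_left_cancel₀ hI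
          push_cast at hk
          linear_combination hk
        have h3 : (n : ℝ) * θ = (k : ℝ) := by exact_mod_cast h2
        exact (hθ.intCast_mul hn).ne_int k h3
      have hne : lam - 1 ≠ 0 := sub_ne_zero.2 hl1
      refine ⟨0, (lam - 1)⁻¹ • fourier n, fun x => ?_⟩
      have key : fourier n (x + (((θ : ℝ)) : AddCircle (1:ℝ))) = fourier n x * lam := by
        rw [hlam, fourier_apply, fourier_apply, fourier_apply, smul_add,
          AddCircle.toCircle_add, Circle.coe_mul]
      simp only [ContinuousMap.smul_apply, smul_eq_mul, key]
      field_simp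
      ring
  | zero => exact ⟨0, 0, by simp⟩
  | add F G _ _ hF hG =>
    obtain ⟨c1, h1, e1⟩ := hF
    obtain ⟨c2, h2, e2⟩ := hG
    refine ⟨c1 + c2, h1 + h2, fun x => ?_⟩
    simp only [ContinuousMap.add_apply, e1 x, e2 x]
    ring
  | smul a F _ hF =>
    obtain ⟨c1, h1, e1⟩ := hF
    refine ⟨a * c1, a • h1, fun x => ?_⟩
    simp only [ContinuousMap.smul_apply, smul_eq_mul, e1 x]
    ring

lemma approx_coboundary (θ : ℝ) (hθ : Irrational θ) (f : C(AddCircle (1:ℝ), ℝ)) {δ : ℝ}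
    (hδ : 0 < δ) :
    ∃ (c : ℝ) (h : C(AddCircle (1:ℝ), ℝ)),
      ∀ x, |f x - (c + h (x + ((θ : ℝ) : AddCircle (1:ℝ))) - h x)| < δ := by
  haveI : Fact (0 < (1:ℝ)) := ⟨one_pos⟩
  set fC : C(AddCircle (1:ℝ), ℂ) := ⟨fun x => (f x : ℂ),
    Complex.continuous_ofReal.comp f.continuous⟩ with hfC
  have h1 : fC ∈ (Submodule.span ℂ (Set.range (@fourier 1))).topologicalClosure := by
    rw [span_fourier_closure_eq_top]; trivial
  have hcl : fC ∈ closure ((Submodule.span ℂ (Set.range (@fourier 1)) :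
      Submodule ℂ C(AddCircle (1:ℝ), ℂ)) : Set C(AddCircle (1:ℝ), ℂ)) := by
    rw [← Submodule.topologicalClosure_coe]; exact h1
  rw [Metric.mem_closure_iff] at hcl
  obtain ⟨F, hF, hdist⟩ := hcl δ hδ
  obtain ⟨c, h, hch⟩ := span_coboundary θ hθ F hF
  refine ⟨c.re, ⟨fun x => (h x).re, Complex.continuous_re.comp h.continuous⟩, fun x => ?_⟩
  have heq : f x - (c.re + (h (x + ((θ : ℝ) : AddCircle (1:ℝ)))).re - (h x).re)
      = (fC x - F x).re := by
    rw [hch x]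
    simp [hfC]
  calc |f x - (c.re + (h (x + ((θ : ℝ) : AddCircle (1:ℝ)))).re - (h x).re)|
      = |(fC x - F x).re| := by rw [heq]
    _ ≤ ‖fC x - F x‖ := Complex.abs_re_le_norm _
    _ = dist (fC x) (F x) := (Complex.dist_eq _ _).symm
    _ ≤ dist fC F := ContinuousMap.dist_apply_le_dist x
    _ < δ := hdist

/-- For an irrational `θ` and a continuous real function `f` on the circle, the
multiplicative cocycle `e^{2πi f}` is approximately a coboundary for the rotation
`ξ ↦ ξ·e^{2πiθ}`: for every `ε > 0` there is a continuous `g : 𝕋 → 𝕋` with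
`|e^{2πi f(ξ)} g(ξ) conj(g(ξ e^{2πiθ})) − 1| < ε` for all `ξ`. -/
theorem stmt11 (θ : ℝ) (hθ : Irrational θ) (f : Circle → ℝ) (hf : Continuous f)
    (ε : ℝ) (hε : 0 < ε) :
    ∃ g : Circle → Circle, Continuous g ∧
      ∀ ξ : Circle,
        ‖(Circle.exp (2 * Real.pi * f ξ) : ℂ) * (g ξ : ℂ) *
          (starRingEnd ℂ) ((g (ξ * Circle.exp (2 * Real.pi * θ)) : ℂ)) - 1‖ < ε := by
  have hπ : 0 < π := Real.pi_pos
  set δ : ℝ := min ε 1 / 32 with hδdef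
  have hmin : 0 < min ε 1 := lt_min hε one_pos
  have hδ : 0 < δ := by positivity
  set e : AddCircle (1:ℝ) ≃ₜ Circle := AddCircle.homeomorphCircle one_ne_zero with he
  set fA : C(AddCircle (1:ℝ), ℝ) := ⟨fun x => f (e x), hf.comp e.continuous⟩ with hfA
  obtain ⟨c, h, hch⟩ := approx_coboundary θ hθ fA hδ
  obtain ⟨n, m, hnm⟩ := exists_int_close θ hθ c δ hδ
  refine ⟨fun ξ => ξ ^ n * Circle.exp (2 * π * h (e.symm ξ)), ?_, ?_⟩
  · exact (continuous_zpow n).mul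
      (Circle.exp.continuous.comp (continuous_const.mul (h.continuous.comp e.symm.continuous)))
  · intro ξ
    beta_reduce
    set L : Circle := Circle.exp (2 * π * θ) with hL
    have htc : AddCircle.toCircle (e.symm ξ) = ξ := by
      rw [← AddCircle.homeomorphCircle_apply one_ne_zero]
      exact e.apply_symm_apply ξ
    have key1 : e.symm (ξ * L) = e.symm ξ + ((θ : ℝ) : AddCircle (1:ℝ)) := by
      apply e.injective
      rw [e.apply_symm_apply, he, AddCircle.homeomorphCircle_apply,
        AddCircle.toCircle_add]
      rw [← he, htc, AddCircle.toCircle_apply_mk]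
      congr 2
      norm_num
      exact hL
    set u : ℝ := h (e.symm ξ) with hu
    set v : ℝ := h (e.symm ξ + ((θ : ℝ) : AddCircle (1:ℝ))) with hv
    set t : ℝ := f ξ + u - v - n * θ - m with ht
    -- the Circle-level identity
    have hcirc : Circle.exp (2 * π * f ξ) * (ξ ^ n * Circle.exp (2 * π * u)) *
        ((ξ * L) ^ n * Circle.exp (2 * π * h (e.symm (ξ * L))))⁻¹
        = Circle.exp (2 * π * t) := by
      rw [key1, ← hv, mul_zpow, hL, circle_exp_zpow, comm_group_helper]
      rw [← Circle.exp_add, ← div_eq_mul_inv, ← div_eq_mul_inv, ← Circle.exp_sub,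
        ← Circle.exp_sub]
      have harg : 2 * π * f ξ + 2 * π * u - 2 * π * v - (n : ℝ) * (2 * π * θ)
          = 2 * π * t + (m : ℝ) * (2 * π) := by
        rw [ht]; push_cast; ring
      rw [harg, Circle.exp_add, Circle.exp_int_mul_two_pi, mul_one]
    have hconj : (starRingEnd ℂ)
        (((ξ * L) ^ n * Circle.exp (2 * π * h (e.symm (ξ * L))) : Circle) : ℂ)
        = ((((ξ * L) ^ n * Circle.exp (2 * π * h (e.symm (ξ * L))))⁻¹ : Circle) : ℂ) :=
      (Circle.coe_inv_eq_conj _).symm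
    rw [hconj, ← Circle.coe_mul, ← Circle.coe_mul, hcirc]
    -- now bound |exp(2πt i) - 1|
    have hb1 : |fA (e.symm ξ) - (c + v - u)| < δ := hch (e.symm ξ)
    have hfAξ : fA (e.symm ξ) = f ξ := by
      simp only [hfA, ContinuousMap.coe_mk]
      rw [e.apply_symm_apply]
    have hb1' : |f ξ - (c + v - u)| < δ := by rwa [hfAξ] at hb1
    have hbt : |t| < 2 * δ := by
      have : t = (f ξ - (c + v - u)) + (c - (m + n * θ)) := by rw [ht]; ring
      rw [this]
      calc |f ξ - (c + v - u) + (c - (m + n * θ))|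
          ≤ |f ξ - (c + v - u)| + |c - (m + n * θ)| := abs_add_le _ _
        _ < δ + δ := add_lt_add hb1' hnm
        _ = 2 * δ := by ring
    have habs : ‖((2 * π * t : ℝ) : ℂ) * Complex.I‖ = 2 * π * |t| := by
      rw [norm_mul, Complex.norm_I, mul_one, Complex.norm_real, Real.norm_eq_abs, abs_mul]
      have : |2 * π| = 2 * π := abs_of_pos (by positivity)
      rw [this]
    have hsmall : ‖((2 * π * t : ℝ) : ℂ) * Complex.I‖ ≤ 1 := by
      rw [habs]
      have h4 : π ≤ 4 := Real.pi_le_four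
      have : 2 * π * |t| ≤ 2 * 4 * (2 * δ) := by
        apply mul_le_mul (by nlinarith) (le_of_lt hbt) (abs_nonneg _) (by norm_num)
      have hδ1 : δ ≤ 1 / 32 := by
        rw [hδdef]
        have : min ε 1 ≤ 1 := min_le_right _ _
        linarith
      linarith
    calc ‖(Circle.exp (2 * π * t) : ℂ) - 1‖
        = ‖Complex.exp (((2 * π * t : ℝ) : ℂ) * Complex.I) - 1‖ := by
          rw [Circle.coe_exp]
      _ ≤ 2 * ‖((2 * π * t : ℝ) : ℂ) * Complex.I‖ :=
          Complex.norm_exp_sub_one_le hsmall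
      _ = 2 * (2 * π * |t|) := by rw [habs]
      _ < 2 * (2 * π * (2 * δ)) := by
          have : 2 * π * |t| < 2 * π * (2 * δ) := by
            apply mul_lt_mul_of_pos_left hbt (by positivity)
          linarith
      _ ≤ ε := by
          have h4 : π ≤ 4 := Real.pi_le_four
          have hδε : δ ≤ ε / 32 := by
            rw [hδdef]
            have : min ε 1 ≤ ε := min_le_left _ _
            linarith
          nlinarith

end
end

section
/- Let θ be an irrational number, d a nonzero integer, and f₁, f₂ : 𝕋 → ℝ continuous functions. Set α = Φ_{θ,d,f₁} and β = Φ_{θ,d,f₂}. Then for every δ > 0 there exist an integer k ∈ ℤ and a continuous function g₀ : 𝕋 → ℝ such that, with g(ξ) = ξ^{kd}·e^{2πi g₀(ξ)} and σ : 𝕋² → 𝕋² defined by σ(ξ,ζ) = (ξ, ζ·g(ξ)) (a homeomorphism of 𝕋² preserving m₂), one has dist(σ(α(x)), β(σ(x))) < δ for all x ∈ 𝕋². -/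
noncomputable section

open scoped Real

/-- The metric `dist((ξ,ζ),(ξ′,ζ′)) = sqrt(|ξ − ξ′|² + |ζ − ζ′|²)` on `𝕋²`. -/
def distT2 (p q : Circle × Circle) : ℝ :=
  Real.sqrt (‖(p.1 : ℂ) - (q.1 : ℂ)‖ ^ 2 + ‖(p.2 : ℂ) - (q.2 : ℂ)‖ ^ 2)

/-- The Furstenberg transformation `Φ_{θ,d,f}(ξ,ζ) = (ξ·e^{2πiθ}, ζ·ξ^d·e^{2πi f(ξ)})`. -/
def Phi (θ : ℝ) (d : ℤ) (f : Circle → ℝ) : Circle × Circle → Circle × Circle :=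
  fun p => (p.1 * Circle.exp (2 * Real.pi * θ), p.2 * p.1 ^ d * Circle.exp (2 * Real.pi * f p.1))

lemma circle_coe_zpow (z : Circle) (n : ℤ) : ((z ^ n : Circle) : ℂ) = (z : ℂ) ^ n := by
  cases n with
  | ofNat m => norm_cast
  | negSucc m => norm_cast

lemma circle_exp_int_mul (n : ℤ) (x : ℝ) : Circle.exp (n * x) = Circle.exp x ^ n := by
  ext
  rw [circle_coe_zpow, Circle.coe_exp, Circle.coe_exp, ← Complex.exp_int_mul]
  push_cast
  ring_nf

lemma circle_abs_exp_sub_one (t : ℝ) (ht : |t| ≤ 1) :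
    ‖(Circle.exp t : ℂ) - 1‖ ≤ 2 * |t| := by
  rw [Circle.coe_exp]
  have := Complex.norm_exp_sub_one_le (x := (t : ℂ) * Complex.I) (by simpa using ht)
  simpa using this

lemma distT2_pair (u a b : Circle) : distT2 (u, a) (u, b) = ‖(a:ℂ) - (b:ℂ)‖ := by
  unfold distT2
  simp only [sub_self, norm_zero]
  rw [zero_pow two_ne_zero, zero_add, Real.sqrt_sq (norm_nonneg _)]

lemma dense_step (γ : ℝ) (hγ : Irrational γ) (x ε : ℝ) (hε : 0 < ε) :
    ∃ (k m : ℤ), |k * γ - m - x| < ε := by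
  set S : AddSubgroup ℝ := AddSubgroup.zmultiples γ ⊔ AddSubgroup.zmultiples 1 with hS
  have hdense : Dense (S : Set ℝ) := by
    rcases S.dense_or_cyclic with h | ⟨a, ha⟩
    · exact h
    · exfalso
      have hγS : γ ∈ S := AddSubgroup.mem_sup_left (AddSubgroup.mem_zmultiples γ)
      have h1S : (1:ℝ) ∈ S := AddSubgroup.mem_sup_right (AddSubgroup.mem_zmultiples 1)
      rw [ha, ← AddSubgroup.zmultiples_eq_closure] at hγS h1S
      obtain ⟨p, hp⟩ := hγS
      obtain ⟨q, hq⟩ := h1S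
      have hq0 : (q : ℝ) ≠ 0 := by
        intro h0
        simp only [zsmul_eq_mul] at hq
        rw [h0, zero_mul] at hq; exact one_ne_zero hq.symm
      refine hγ ⟨(p : ℚ) / q, ?_⟩
      simp only [zsmul_eq_mul] at hp hq
      have key : γ * q = p := by linear_combination (-(q:ℝ)) * hp + (p:ℝ) * hq
      push_cast
      field_simp
      linarith [key]
  obtain ⟨y, hyS, hy⟩ := Metric.mem_closure_iff.1 (hdense x) ε hε
  obtain ⟨u, hu, v, hv, huv⟩ := AddSubgroup.mem_sup.1 hyS
  obtain ⟨k, hk⟩ := hu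
  obtain ⟨m', hm'⟩ := hv
  refine ⟨k, -m', ?_⟩
  simp only [zsmul_eq_mul] at hk hm'
  have : (k : ℝ) * γ - (-m' : ℤ) - x = y - x := by push_cast [← huv, ← hk, ← hm']; ring
  rw [this, ← Real.dist_eq, dist_comm]
  exact hy

lemma fourier_eq_zpow (n : ℤ) (x : AddCircle (1:ℝ)) :
    fourier n x = ((AddCircle.toCircle x : ℂ)) ^ n := by
  induction x using QuotientAddGroup.induction_on with
  | H t =>
    rw [fourier_coe_apply, AddCircle.toCircle_apply_mk, Circle.coe_exp, ← Complex.exp_int_mul]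
    congr 1
    push_cast
    field_simp

lemma toCircle_surjective : Function.Surjective (AddCircle.toCircle (T := (1:ℝ))) := by
  intro ξ
  obtain ⟨x, hx⟩ := (AddCircle.homeomorphCircle (one_ne_zero : (1:ℝ) ≠ 0)).surjective ξ
  exact ⟨x, by rw [← AddCircle.homeomorphCircle_apply, hx]; exact one_ne_zero⟩

lemma trig_approx (F : Circle → ℝ) (hF : Continuous F) (ε : ℝ) (hε : 0 < ε) :
    ∃ c : ℤ →₀ ℂ, ∀ ξ : Circle,
      ‖(∑ n ∈ c.support, c n * (ξ:ℂ) ^ n) - (F ξ : ℂ)‖ < ε := by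
  haveI : Fact (0 < (1:ℝ)) := ⟨one_pos⟩
  set G' : C(AddCircle (1:ℝ), ℂ) :=
    ⟨fun x => (F (AddCircle.toCircle x) : ℂ),
      Complex.continuous_ofReal.comp (hF.comp AddCircle.continuous_toCircle)⟩ with hG'
  have h1 : G' ∈ (Submodule.span ℂ (Set.range (@fourier 1))).topologicalClosure := by
    rw [span_fourier_closure_eq_top]; trivial
  have h2 : G' ∈ closure ((Submodule.span ℂ (Set.range (@fourier 1))) : Set _) := h1
  obtain ⟨P, hP, hdist⟩ := Metric.mem_closure_iff.1 h2 ε hε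
  obtain ⟨c, hc⟩ := (Finsupp.mem_span_range_iff_exists_finsupp).1 hP
  refine ⟨c, fun ξ => ?_⟩
  obtain ⟨x, hx⟩ := toCircle_surjective ξ
  have hPx : P x = ∑ n ∈ c.support, c n * (ξ:ℂ) ^ n := by
    rw [← hc]
    rw [Finsupp.sum]
    rw [ContinuousMap.coe_sum, Finset.sum_apply]
    refine Finset.sum_congr rfl fun n _ => ?_
    rw [ContinuousMap.smul_apply, fourier_eq_zpow, hx, smul_eq_mul]
  have := ContinuousMap.dist_apply_le_dist (f := G') (g := P) x
  rw [Complex.dist_eq, hG'] at this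
  simp only [ContinuousMap.coe_mk] at this
  rw [hx] at this
  calc ‖(∑ n ∈ c.support, c n * (ξ:ℂ) ^ n) - (F ξ : ℂ)‖
      = ‖(F ξ : ℂ) - P x‖ := by rw [hPx, ← norm_neg]; ring_nf
    _ ≤ dist G' P := this
    _ < ε := hdist

/-- For `α = Φ_{θ,d,f₁}`, `β = Φ_{θ,d,f₂}` and any `δ > 0`, there are `k ∈ ℤ` and a
continuous `g₀ : 𝕋 → ℝ` such that the homeomorphism `σ(ξ,ζ) = (ξ, ζ·g(ξ))`, with
`g(ξ) = ξ^{kd} e^{2πi g₀(ξ)}`, satisfies `dist(σ(α x), β(σ x)) < δ` for all `x ∈ 𝕋²`. -/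
theorem stmt16 (θ : ℝ) (hθ : Irrational θ) (d : ℤ) (hd : d ≠ 0)
    (f₁ f₂ : Circle → ℝ) (hf₁ : Continuous f₁) (hf₂ : Continuous f₂)
    (δ : ℝ) (hδ : 0 < δ) :
    ∃ (k : ℤ) (g₀ : Circle → ℝ) (σ : Circle × Circle → Circle × Circle),
      Continuous g₀ ∧
      (∀ p : Circle × Circle,
        σ p = (p.1, p.2 * (p.1 ^ (k * d) * Circle.exp (2 * Real.pi * g₀ p.1)))) ∧
      ∀ x : Circle × Circle,
        distT2 (σ (Phi θ d f₁ x)) (Phi θ d f₂ (σ x)) < δ := by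
  have hπ : (0:ℝ) < π := Real.pi_pos
  set ε : ℝ := min (1 / (4 * π)) (δ / (8 * π)) with hεdef
  have hε : 0 < ε := lt_min (by positivity) (by positivity)
  have hε1 : ε ≤ 1 / (4 * π) := min_le_left _ _
  have hε2 : ε ≤ δ / (8 * π) := min_le_right _ _
  obtain ⟨c, hc⟩ := trig_approx (fun ξ => f₂ ξ - f₁ ξ) (hf₂.sub hf₁) ε hε
  set Λ : Circle := Circle.exp (2 * π * θ) with hΛ
  -- Λ^n ≠ 1 for n ≠ 0
  have hΛn : ∀ n : ℤ, n ≠ 0 → ((Λ : ℂ) ^ n) ≠ 1 := by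
    intro n hn h1
    rw [← circle_coe_zpow, ← circle_exp_int_mul] at h1
    rw [Circle.coe_eq_one, Circle.exp_eq_one] at h1
    obtain ⟨m, hm⟩ := h1
    apply hθ
    refine ⟨(m : ℚ) / n, ?_⟩
    have h2π : (2 * π) ≠ 0 := by positivity
    have : (n : ℝ) * θ = m := by
      have := hm
      field_simp at this ⊢
      nlinarith [this]
    push_cast
    rw [div_eq_iff (show (n:ℝ) ≠ 0 from Int.cast_ne_zero.mpr hn)]
    linear_combination -this
  set a : ℤ → ℂ := fun n => c n / ((Λ : ℂ) ^ n - 1) with ha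
  set g₁ : Circle → ℂ := fun ξ => ∑ n ∈ c.support.erase 0, a n * ((ξ ^ n : Circle) : ℂ) with hg₁
  set g₀ : Circle → ℝ := fun ξ => (g₁ ξ).re with hg₀
  have hg₁cont : Continuous g₁ := by
    apply continuous_finset_sum
    intro n _
    exact continuous_const.mul (continuous_subtype_val.comp (continuous_zpow n))
  have hg₀cont : Continuous g₀ := Complex.continuous_re.comp hg₁cont
  set Sc : Circle → ℂ := fun ξ => ∑ n ∈ c.support, c n * (ξ:ℂ) ^ n with hSc
  -- coboundary identity
  have key : ∀ ξ : Circle, g₁ (Λ * ξ) - g₁ ξ = Sc ξ - c 0 := by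
    intro ξ
    have hterm : ∀ n ∈ c.support.erase 0,
        a n * (((Λ * ξ) ^ n : Circle) : ℂ) - a n * ((ξ ^ n : Circle) : ℂ) = c n * (ξ:ℂ) ^ n := by
      intro n hn
      have hn0 : n ≠ 0 := Finset.ne_of_mem_erase hn
      have hne : (Λ : ℂ) ^ n - 1 ≠ 0 := sub_ne_zero.2 (hΛn n hn0)
      rw [circle_coe_zpow, circle_coe_zpow, Circle.coe_mul, mul_zpow, ha]
      field_simp
    have h1 : g₁ (Λ * ξ) - g₁ ξ = ∑ n ∈ c.support.erase 0, c n * (ξ:ℂ) ^ n := by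
      rw [hg₁, ← Finset.sum_sub_distrib]
      exact Finset.sum_congr rfl hterm
    rw [h1]
    by_cases h0 : (0:ℤ) ∈ c.support
    · rw [Finset.sum_erase_eq_sub h0, hSc]
      norm_num
    · rw [Finset.erase_eq_of_notMem h0, hSc]
      have : c 0 = 0 := Finsupp.notMem_support_iff.1 h0
      rw [this, sub_zero]
  -- choose k, m
  obtain ⟨k, m, hkm⟩ := dense_step (d * θ) (hθ.intCast_mul hd) ((c 0).re) ε hε
  refine ⟨k, g₀, fun p => (p.1, p.2 * (p.1 ^ (k * d) * Circle.exp (2 * Real.pi * g₀ p.1))),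
    hg₀cont, fun p => rfl, ?_⟩
  rintro ⟨ξ, ζ⟩
  simp only [Phi]
  rw [distT2_pair]
  -- the ratio identity
  set u : ℝ := (k : ℝ) * d * θ + f₁ ξ + g₀ (ξ * Λ) - g₀ ξ - f₂ ξ with hu
  have hratio :
      (ζ * ξ ^ d * Circle.exp (2 * Real.pi * f₁ ξ)) *
          ((ξ * Λ) ^ (k * d) * Circle.exp (2 * Real.pi * g₀ (ξ * Λ))) =
        ((ζ * (ξ ^ (k * d) * Circle.exp (2 * Real.pi * g₀ ξ))) * ξ ^ d *
          Circle.exp (2 * Real.pi * f₂ ξ)) * Circle.exp (2 * π * u) := by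
    have hsplit : 2 * π * u = (2 * π * f₁ ξ) + ((k * d : ℤ) : ℝ) * (2 * π * θ)
        + (2 * π * g₀ (ξ * Λ)) + (-(2 * π * g₀ ξ)) + (-(2 * π * f₂ ξ)) := by
      push_cast
      ring
    apply Circle.coe_injective
    rw [hsplit, Circle.exp_add, Circle.exp_add, Circle.exp_add, Circle.exp_add,
      Circle.exp_neg, Circle.exp_neg, mul_zpow, hΛ, ← circle_exp_int_mul]
    push_cast [Circle.coe_mul, Circle.coe_inv, circle_coe_zpow, mul_zpow]
    field_simp
  rw [hratio]
  -- now |B * exp(2πu) - B| = |exp(2πu) - 1|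
  set B : Circle := (ζ * (ξ ^ (k * d) * Circle.exp (2 * Real.pi * g₀ ξ))) * ξ ^ d *
      Circle.exp (2 * Real.pi * f₂ ξ) with hB
  have habs : ‖(↑(B * Circle.exp (2 * π * u)) : ℂ) - (B : ℂ)‖ =
      ‖(Circle.exp (2 * π * u) : ℂ) - 1‖ := by
    rw [Circle.coe_mul]
    rw [show (B : ℂ) * (Circle.exp (2 * π * u) : ℂ) - (B : ℂ)
        = (B : ℂ) * ((Circle.exp (2 * π * u) : ℂ) - 1) by ring]
    rw [norm_mul, Circle.norm_coe, one_mul]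
  rw [habs]
  -- reduce mod m
  have hmod : Circle.exp (2 * π * u) = Circle.exp (2 * π * (u - m)) := by
    rw [show 2 * π * u = 2 * π * (u - m) + 2 * π * (m:ℝ) by ring, Circle.exp_add,
      Circle.exp_two_pi_mul_int, mul_one]
  rw [hmod]
  -- bound |u - m|
  have hcob : g₀ (ξ * Λ) - g₀ ξ = (Sc ξ).re - (c 0).re := by
    have := key ξ
    have h' := congrArg Complex.re this
    rw [Complex.sub_re, Complex.sub_re] at h'
    rw [hg₀]
    simp only []
    rw [mul_comm ξ Λ]
    exact h'
  have hre : |(Sc ξ).re - (f₂ ξ - f₁ ξ)| < ε := by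
    have h1 := hc ξ
    have h2 : |(Sc ξ - ((f₂ ξ - f₁ ξ : ℝ) : ℂ)).re| ≤ ‖Sc ξ - ((f₂ ξ - f₁ ξ : ℝ):ℂ)‖ :=
      Complex.abs_re_le_norm _
    rw [Complex.sub_re, Complex.ofReal_re] at h2
    exact lt_of_le_of_lt h2 h1
  have humm : |u - m| < 2 * ε := by
    have h1 : u - m = ((k:ℝ) * (d * θ) - m - (c 0).re) + ((Sc ξ).re - (f₂ ξ - f₁ ξ)) := by
      rw [hu]
      linear_combination hcob
    rw [h1]
    calc |((k:ℝ) * (d * θ) - m - (c 0).re) + ((Sc ξ).re - (f₂ ξ - f₁ ξ))|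
        ≤ |(k:ℝ) * (d * θ) - m - (c 0).re| + |(Sc ξ).re - (f₂ ξ - f₁ ξ)| := abs_add_le _ _
      _ < ε + ε := add_lt_add hkm hre
      _ = 2 * ε := by ring
  have habs2 : |2 * π * (u - m)| ≤ 1 := by
    rw [abs_mul, abs_of_pos (by positivity : (0:ℝ) < 2 * π)]
    have : 2 * π * |u - m| ≤ 2 * π * (2 * ε) := by nlinarith
    have h4 : 2 * π * (2 * ε) ≤ 2 * π * (2 * (1 / (4 * π))) := by nlinarith
    calc 2 * π * |u - m| ≤ 2 * π * (2 * ε) := this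
      _ ≤ 2 * π * (2 * (1 / (4 * π))) := h4
      _ = 1 := by field_simp; ring
  have hfin : 2 * |2 * π * (u - m)| < δ := by
    have h5 : |2 * π * (u - m)| = 2 * π * |u - m| := by
      rw [abs_mul, abs_of_pos (show (0:ℝ) < 2 * π by positivity)]
    rw [h5]
    have h6 : 2 * π * |u - m| < 2 * π * (2 * ε) := by nlinarith
    have h7 : 2 * π * (2 * ε) ≤ δ / 2 := by
      have h8 : 2 * π * (2 * ε) ≤ 2 * π * (2 * (δ / (8 * π))) := by nlinarith
      have h9 : 2 * π * (2 * (δ / (8 * π))) = δ / 2 := by field_simp; ring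
      linarith
    linarith
  exact lt_of_le_of_lt (circle_abs_exp_sub_one _ habs2) hfin
  
end
end
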